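/- Unit-rank channels without shared secret, achievability (Theorem 7, lower bound): Let N_a ≥ 1 and n ≥ 1 be integers, σ_b, σ_w, λ_b, λ_w, δ, P > 0 real numbers, and let u_b, u_w ∈ ℂ^{N_a} be unit vectors with c := |⟨u_w, u_b⟩|² > 0. Let W_b := λ_b • (outer product of u_b with itself) and W_w := λ_w • (outer product of u_w with itself). Define Ĉ_pd(δ) := sSup { R(Q) : Q an N_a×N_a complex Hermitian positive semidefinite matrix with (Q.trace).re ≤ P and Real.log((det(1 + σ_w⁻² • W_w*Q)).re) ≤ 2δ²/n }. Then Ĉ_pd(δ) ≥ min { Real.log(1 + 2·σ_w²·δ²·λ_b/(σ_b²·λ_w·c·n)), Real.log(1 + λ_b·P/σ_b²) }. -/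

import Mathlib

/-!
Put all power along Bob's direction, `Q = p • u_b u_bᴴ`. By the matrix determinant lemma Bob's
rate is then `log (1 + λ_b p / σ_b²)` and Willie's capacity is
`log (1 + λ_w c p / σ_w²) ≤ λ_w c p / σ_w²`, so `p = min P (2 σ_w² δ² / (λ_w c n))` is feasible
and attains the bound. The supremum is finite because `uᴴ Q u ≤ tr Q` for every positive
semidefinite `Q` and unit vector `u`.
-/

open Matrix
open scoped ComplexOrder InnerProductSpace

/-- The rate functional for Bob's channel: `R(Q) = log (det (1 + σ_b⁻² W_b Q)).re`. -/
noncomputable def Rfun {Na : ℕ} (σb : ℝ) (Wb Q : Matrix (Fin Na) (Fin Na) ℂ) : ℝ :=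
  Real.log ((1 + (σb ^ 2)⁻¹ • (Wb * Q)).det.re)

/-- The outer product `u uᴴ` of a vector with itself, with `(i,j)` entry `u i * conj (u j)`. -/
noncomputable def outer {Na : ℕ} (u : EuclideanSpace ℂ (Fin Na)) :
    Matrix (Fin Na) (Fin Na) ℂ :=
  Matrix.of fun i j => u i * star (u j)

namespace Matrix

theorem det_one_add_vecMulVec {m α : Type*} [Fintype m] [DecidableEq m] [CommRing α]
    (u v : m → α) : det (1 + vecMulVec u v) = 1 + v ⬝ᵥ u := by
  rw [vecMulVec_eq Unit, det_one_add_replicateCol_mul_replicateRow]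

end Matrix

section RankOne

open WithLp (ofLp toLp)

variable {Na : ℕ}

theorem outer_eq_vecMulVec (u : EuclideanSpace ℂ (Fin Na)) :
    outer u = vecMulVec (ofLp u) (star (ofLp u)) := rfl

theorem outer_posSemidef (u : EuclideanSpace ℂ (Fin Na)) : (outer u).PosSemidef :=
  posSemidef_vecMulVec_self_star _

theorem trace_outer (u : EuclideanSpace ℂ (Fin Na)) : (outer u).trace = (‖u‖ ^ 2 : ℝ) := by
  rw [outer_eq_vecMulVec, trace_vecMulVec, ← EuclideanSpace.inner_eq_star_dotProduct,
    inner_self_eq_norm_sq_to_K]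
  norm_cast

theorem dotProduct_outer_mulVec (u v : EuclideanSpace ℂ (Fin Na)) :
    star (ofLp u) ⬝ᵥ (outer v *ᵥ ofLp u) = (‖⟪v, u⟫_ℂ‖ ^ 2 : ℝ) := by
  have hvu : star (ofLp v) ⬝ᵥ ofLp u = ⟪v, u⟫_ℂ := dotProduct_comm _ _
  have huv : star (ofLp u) ⬝ᵥ ofLp v = starRingEnd ℂ ⟪v, u⟫_ℂ := by
    rw [inner_conj_symm]
    exact dotProduct_comm _ _
  rw [outer_eq_vecMulVec, vecMulVec_mulVec, dotProduct_smul, MulOpposite.smul_eq_mul_unop,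
    MulOpposite.unop_op, hvu, huv, mul_comm, Complex.mul_conj']
  norm_cast

theorem re_det_one_add_smul_outer_mul (a l : ℝ) (u : EuclideanSpace ℂ (Fin Na))
    (Q : Matrix (Fin Na) (Fin Na) ℂ) :
    (1 + a • ((l : ℂ) • outer u * Q)).det.re =
      1 + a * l * (star (ofLp u) ⬝ᵥ (Q *ᵥ ofLp u)).re := by
  have hrankOne : a • ((l : ℂ) • outer u * Q) =
      vecMulVec (((a * l : ℝ) : ℂ) • ofLp u) (star (ofLp u) ᵥ* Q) := by
    rw [outer_eq_vecMulVec, smul_mul, vecMulVec_mul, ← smul_vecMulVec, ← smul_vecMulVec]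
    congr 1
    ext i
    simp only [Pi.smul_apply, Complex.real_smul, smul_eq_mul, Complex.ofReal_mul]
    ring
  rw [hrankOne, det_one_add_vecMulVec, dotProduct_smul, ← dotProduct_mulVec, smul_eq_mul,
    Complex.add_re, Complex.one_re, Complex.re_ofReal_mul]

theorem re_dotProduct_mulVec_le_re_trace {Q : Matrix (Fin Na) (Fin Na) ℂ} (hQ : Q.PosSemidef)
    {u : EuclideanSpace ℂ (Fin Na)} (hu : ‖u‖ = 1) :
    (star (ofLp u) ⬝ᵥ (Q *ᵥ ofLp u)).re ≤ Q.trace.re := by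
  obtain ⟨m, v, rfl⟩ := posSemidef_iff_eq_sum_vecMulVec.mp hQ
  have hv : ∑ i, vecMulVec (v i) (star (v i)) = ∑ i, outer (toLp 2 (v i)) := rfl
  rw [hv, sum_mulVec, dotProduct_sum, trace_sum, Complex.re_sum, Complex.re_sum]
  refine Finset.sum_le_sum fun i _ => ?_
  rw [dotProduct_outer_mulVec, trace_outer, Complex.ofReal_re, Complex.ofReal_re]
  gcongr
  simpa [hu] using norm_inner_le_norm (𝕜 := ℂ) (toLp 2 (v i)) u

theorem re_det_one_add_smul_outer_mul_smul_outer (a l p : ℝ)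
    (u v : EuclideanSpace ℂ (Fin Na)) :
    (1 + a • ((l : ℂ) • outer u * (p • outer v))).det.re =
      1 + a * l * p * ‖⟪v, u⟫_ℂ‖ ^ 2 := by
  rw [re_det_one_add_smul_outer_mul, smul_mulVec, dotProduct_smul, Complex.real_smul,
    dotProduct_outer_mulVec, Complex.re_ofReal_mul, Complex.ofReal_re, mul_assoc (a * l)]

theorem Rfun_smul_outer_smul_outer (σ l p : ℝ) {u : EuclideanSpace ℂ (Fin Na)} (hu : ‖u‖ = 1) :
    Rfun σ ((l : ℂ) • outer u) (p • outer u) = Real.log (1 + l * p / σ ^ 2) := by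
  rw [Rfun, re_det_one_add_smul_outer_mul_smul_outer, inner_self_eq_norm_sq_to_K, hu]
  norm_num
  ring_nf

theorem Rfun_le_log_of_re_trace_le {σ l P : ℝ} (hl : 0 ≤ l) {u : EuclideanSpace ℂ (Fin Na)}
    (hu : ‖u‖ = 1) {Q : Matrix (Fin Na) (Fin Na) ℂ} (hQ : Q.PosSemidef) (hQP : Q.trace.re ≤ P) :
    Rfun σ ((l : ℂ) • outer u) Q ≤ Real.log (1 + l * P / σ ^ 2) := by
  have hd : 0 ≤ (star (ofLp u) ⬝ᵥ (Q *ᵥ ofLp u)).re :=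
    (Complex.nonneg_iff.mp (hQ.dotProduct_mulVec_nonneg _)).1
  rw [Rfun, re_det_one_add_smul_outer_mul, div_eq_inv_mul, ← mul_assoc]
  gcongr
  exact (re_dotProduct_mulVec_le_re_trace hQ hu).trans hQP

end RankOne

theorem unit_rank_no_secret_achievability_general (Na n : ℕ)
    (σb σw lb lw δ P : ℝ) (hσw : 0 < σw) (hlb : 0 < lb) (hlw : 0 < lw)
    (hP : 0 < P)
    (ub uw : EuclideanSpace ℂ (Fin Na)) (hub : ‖ub‖ = 1)
    (hc : 0 < ‖(⟪uw, ub⟫_ℂ)‖ ^ 2) :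
    min (Real.log (1 + 2 * σw ^ 2 * δ ^ 2 * lb /
          (σb ^ 2 * lw * ‖(⟪uw, ub⟫_ℂ)‖ ^ 2 * n)))
        (Real.log (1 + lb * P / σb ^ 2))
      ≤ sSup {r : ℝ | ∃ Q : Matrix (Fin Na) (Fin Na) ℂ, Q.PosSemidef ∧
          (Q.trace).re ≤ P ∧
          Real.log ((1 + (σw ^ 2)⁻¹ • (((lw : ℂ) • outer uw) * Q)).det.re) ≤ 2 * δ ^ 2 / n ∧
          r = Rfun σb ((lb : ℂ) • outer ub) Q} := by
  set c := ‖(⟪uw, ub⟫_ℂ)‖ ^ 2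
  set q := 2 * σw ^ 2 * δ ^ 2 / (lw * c * n)
  set p := min P q
  have hp : 0 ≤ p := le_min hP.le (by positivity)
  calc _ ≤ Real.log (1 + lb * p / σb ^ 2) := by
        rcases min_choice P q with h | h <;> rw [show p = _ from h]
        · exact min_le_right _ _
        · exact (min_le_left _ _).trans_eq (by simp only [q]; ring_nf)
    _ = Rfun σb ((lb : ℂ) • outer ub) (p • outer ub) :=
        (Rfun_smul_outer_smul_outer _ _ _ hub).symm
    _ ≤ _ := le_csSup ?bdd ?mem
  case bdd =>
    refine ⟨Real.log (1 + lb * P / σb ^ 2), ?_⟩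
    rintro _ ⟨Q, hQ, hQP, -, rfl⟩
    exact Rfun_le_log_of_re_trace_le hlb.le hub hQ hQP
  case mem =>
    refine ⟨p • outer ub, (outer_posSemidef ub).smul hp, ?_, ?_, rfl⟩
    · rw [trace_smul, trace_outer, hub]
      simp only [one_pow, Complex.ofReal_one, Complex.smul_re, Complex.one_re, smul_eq_mul,
        mul_one]
      exact min_le_left P q
    · rw [re_det_one_add_smul_outer_mul_smul_outer, norm_inner_symm]
      calc _ ≤ (σw ^ 2)⁻¹ * lw * p * c :=
            (Real.log_le_sub_one_of_pos (by positivity)).trans_eq (by ring)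
        _ ≤ (σw ^ 2)⁻¹ * lw * q * c := by gcongr; exact min_le_right _ _
        _ = 2 * δ ^ 2 / n := by simp only [q]; field_simp

/-- **Unit-rank channels without shared secret, achievability (Theorem 7, lower bound).**
For unit-rank Gram matrices `W_b = lb • u_b u_bᴴ`, `W_w = lw • u_w u_wᴴ` with
`c = |⟨u_w, u_b⟩|² > 0`, the covert capacity `Ĉ_pd(δ)` without a shared secret (with the
covertness constraint `log (det (1 + σ_w⁻² W_w Q)).re ≤ 2δ²/n`) is at least the minimum of
`log(1 + 2·σ_w²·δ²·λ_b/(σ_b²·λ_w·c·n))` and the unconstrained capacity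
`log(1 + λ_b·P/σ_b²)`. -/
theorem unit_rank_no_secret_achievability (Na n : ℕ) (hNa : 1 ≤ Na) (hn : 1 ≤ n)
    (σb σw lb lw δ P : ℝ) (hσb : 0 < σb) (hσw : 0 < σw) (hlb : 0 < lb) (hlw : 0 < lw)
    (hδ : 0 < δ) (hP : 0 < P)
    (ub uw : EuclideanSpace ℂ (Fin Na)) (hub : ‖ub‖ = 1) (huw : ‖uw‖ = 1)
    (hc : 0 < ‖(⟪uw, ub⟫_ℂ)‖ ^ 2) :
    min (Real.log (1 + 2 * σw ^ 2 * δ ^ 2 * lb /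
          (σb ^ 2 * lw * ‖(⟪uw, ub⟫_ℂ)‖ ^ 2 * n)))
        (Real.log (1 + lb * P / σb ^ 2))
      ≤ sSup {r : ℝ | ∃ Q : Matrix (Fin Na) (Fin Na) ℂ, Q.PosSemidef ∧
          (Q.trace).re ≤ P ∧
          Real.log ((1 + (σw ^ 2)⁻¹ • (((lw : ℂ) • outer uw) * Q)).det.re) ≤ 2 * δ ^ 2 / n ∧
          r = Rfun σb ((lb : ℂ) • outer ub) Q} :=
  unit_rank_no_secret_achievability_general Na n σb σw lb lw δ P hσw hlb hlw hP ub uw hub hc
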